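/- Define γ_ℝ : ℝ² → ℝ by γ_ℝ(x₁,x₂) = x₁x₂/|x₁| when |x₁| ≥ |x₂| (with γ_ℝ(0,0) = 0) and γ_ℝ(x₁,x₂) = x₁x₂/|x₂| when |x₁| < |x₂|, and let K = {x ∈ ℝ³ : γ_ℝ(x₁,x₂) − x₃ = 0} ∪ {x ∈ ℝ³ : γ_ℝ(x₁,x₂) + x₃ − √2 = 0}. Then the open set S = ℝ³ − K has exactly 5 connected components, and the five points (0,0,2), (0,0,−1), (−1,−1,1/2), (1,1,1/2), (0,0,1/2) lie in pairwise distinct components. (S is the fixed locus of complex conjugation on the total space of the S¹-invariant Lagrangian fibration with amoeba discriminant.) -/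
import Mathlib

/-- The restriction of `γ` to real points: `γℝ(x₁,x₂) = x₁x₂/|x₁|` when `|x₁| ≥ |x₂|`
and `x₁x₂/|x₂|` otherwise (division by zero yields `0`, so `γℝ(0,0) = 0`). -/
noncomputable def gamR (x : ℝ × ℝ) : ℝ :=
  if |x.2| ≤ |x.1| then x.1 * x.2 / |x.1| else x.1 * x.2 / |x.2|

lemma gamR_eq (x : ℝ × ℝ) : gamR x = x.1 * x.2 / max |x.1| |x.2| := by
  unfold gamR
  split_ifs with h
  · rw [max_eq_left h]
  · rw [max_eq_right (not_le.1 h).le]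

lemma abs_gamR_le_fst (x : ℝ × ℝ) : |gamR x| ≤ |x.1| := by
  have hm : 0 ≤ max |x.1| |x.2| := le_trans (abs_nonneg _) (le_max_left _ _)
  rw [gamR_eq, abs_div, abs_mul, abs_of_nonneg hm]
  rcases hm.eq_or_lt with h | h
  · rw [← h, div_zero]; exact abs_nonneg _
  · rw [div_le_iff₀ h]
    have h2 := le_max_right |x.1| |x.2|
    nlinarith [abs_nonneg x.1, abs_nonneg x.2]

lemma abs_gamR_le_snd (x : ℝ × ℝ) : |gamR x| ≤ |x.2| := by
  have hm : 0 ≤ max |x.1| |x.2| := le_trans (abs_nonneg _) (le_max_left _ _)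
  rw [gamR_eq, abs_div, abs_mul, abs_of_nonneg hm]
  rcases hm.eq_or_lt with h | h
  · rw [← h, div_zero]; exact abs_nonneg _
  · rw [div_le_iff₀ h]
    have h2 := le_max_left |x.1| |x.2|
    nlinarith [abs_nonneg x.1, abs_nonneg x.2]

lemma gamR_zero_left (v : ℝ) : gamR (0, v) = 0 := by
  simp [gamR]

lemma gamR_zero : gamR 0 = 0 := gamR_zero_left 0

lemma continuous_gamR : Continuous gamR := by
  have heq : gamR = fun x : ℝ × ℝ => x.1 * x.2 / max |x.1| |x.2| := funext gamR_eq
  rw [continuous_iff_continuousAt]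
  intro x
  rcases eq_or_ne (max |x.1| |x.2|) 0 with h0 | h0
  · have hx1 : x.1 = 0 := by
      have := le_max_left |x.1| |x.2|
      have := abs_nonneg x.1
      have := abs_eq_zero.1 (le_antisymm (by rw [← h0] at *; linarith) (abs_nonneg x.1))
      exact this
    have hg0 : gamR x = 0 := by
      have := abs_gamR_le_fst x
      rw [hx1] at this; simp at this
      exact abs_eq_zero.1 (le_antisymm (by simpa using this) (abs_nonneg _))
    unfold ContinuousAt
    rw [hg0]
    apply squeeze_zero_norm (a := fun y : ℝ × ℝ => |y.1|)
      (fun y => by simpa [Real.norm_eq_abs] using abs_gamR_le_fst y)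
    have hc : Continuous fun y : ℝ × ℝ => |y.1| := continuous_fst.abs
    have ht := hc.tendsto x
    rw [hx1] at ht; simpa using ht
  · rw [heq]
    exact ContinuousAt.div ((continuous_fst.mul continuous_snd).continuousAt)
      ((continuous_fst.abs.max continuous_snd.abs).continuousAt) h0

lemma gamR_smul {a : ℝ} (ha : 0 ≤ a) (u v : ℝ) : gamR (a * u, a * v) = a * gamR (u, v) := by
  rcases ha.eq_or_lt with h | h
  · simp [← h, gamR_zero_left, gamR_zero]
  rcases eq_or_ne (max |u| |v|) 0 with h0 | h0
  · have hu : u = 0 := abs_eq_zero.1 (le_antisymm (le_trans (le_max_left _ _) h0.le) (abs_nonneg _))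
    simp [hu, gamR_zero_left, mul_zero]
  · have hm : 0 < max |u| |v| := lt_of_le_of_ne (le_trans (abs_nonneg _) (le_max_left _ _)) (Ne.symm h0)
    rw [gamR_eq, gamR_eq]
    simp only [abs_mul, abs_of_pos h]
    have key : max (a * |u|) (a * |v|) = a * max |u| |v| := by
      rcases le_total |u| |v| with hc | hc
      · rw [max_eq_right hc, max_eq_right (by nlinarith)]
      · rw [max_eq_left hc, max_eq_left (by nlinarith)]
    rw [key]
    field_simp

lemma gamR_pos_pos {u v : ℝ} (hu : 0 < u) (hv : 0 < v) : gamR (u, v) = min u v := by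
  simp only [gamR, abs_of_pos hu, abs_of_pos hv]
  split_ifs with h
  · rw [min_eq_right h, mul_comm, mul_div_assoc, div_self hu.ne', mul_one]
  · rw [min_eq_left (not_le.1 h).le, mul_div_assoc, div_self hv.ne', mul_one]

lemma gamR_neg_neg {u v : ℝ} (hu : u < 0) (hv : v < 0) : gamR (u, v) = -(max u v) := by
  simp only [gamR, abs_of_neg hu, abs_of_neg hv]
  split_ifs with h
  · rw [max_eq_right (by linarith : u ≤ v), div_neg, mul_comm, mul_div_assoc, div_self hu.ne, mul_one]
  · rw [max_eq_left (by linarith [not_le.1 h] : v ≤ u), div_neg, mul_div_assoc, div_self hv.ne, mul_one]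

/-- The fixed locus `S = ℝ³ − K` of conjugation on the total space of the
`S¹`-invariant fibration with amoeba discriminant, where
`K = {γℝ(x₁,x₂) − x₃ = 0} ∪ {γℝ(x₁,x₂) + x₃ − √2 = 0}`. -/
noncomputable def S18 : Set (ℝ × ℝ × ℝ) :=
  ({x | gamR (x.1, x.2.1) - x.2.2 = 0} ∪
    {x | gamR (x.1, x.2.1) + x.2.2 - Real.sqrt 2 = 0})ᶜ

noncomputable def g1 (x : ℝ × ℝ × ℝ) : ℝ := gamR (x.1, x.2.1) - x.2.2
noncomputable def g2 (x : ℝ × ℝ × ℝ) : ℝ := gamR (x.1, x.2.1) + x.2.2 - Real.sqrt 2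

def RA : Set (ℝ × ℝ × ℝ) := {x | g1 x < 0 ∧ g2 x < 0}
def RB : Set (ℝ × ℝ × ℝ) := {x | g1 x < 0 ∧ 0 < g2 x}
def RC : Set (ℝ × ℝ × ℝ) := {x | 0 < g1 x ∧ g2 x < 0}
def RDp : Set (ℝ × ℝ × ℝ) := {x | 0 < g1 x ∧ 0 < g2 x ∧ 0 < x.1}
def RDm : Set (ℝ × ℝ × ℝ) := {x | 0 < g1 x ∧ 0 < g2 x ∧ x.1 < 0}

lemma sqrt2_pos : 0 < Real.sqrt 2 := Real.sqrt_pos.2 (by norm_num)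
lemma one_lt_sqrt2 : 1 < Real.sqrt 2 := by
  nlinarith [Real.sq_sqrt (show (0:ℝ) ≤ 2 by norm_num), Real.sqrt_nonneg 2]
lemma sqrt2_lt : Real.sqrt 2 < 3/2 := by
  nlinarith [Real.sq_sqrt (show (0:ℝ) ≤ 2 by norm_num), Real.sqrt_nonneg 2]

lemma continuous_g1 : Continuous g1 :=
  (continuous_gamR.comp (continuous_fst.prodMk (continuous_fst.comp continuous_snd))).sub
    (continuous_snd.comp continuous_snd)

lemma continuous_g2 : Continuous g2 :=
  ((continuous_gamR.comp (continuous_fst.prodMk (continuous_fst.comp continuous_snd))).add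
    (continuous_snd.comp continuous_snd)).sub continuous_const

lemma isOpen_RA : IsOpen RA :=
  (isOpen_lt continuous_g1 continuous_const).inter (isOpen_lt continuous_g2 continuous_const)
lemma isOpen_RB : IsOpen RB :=
  (isOpen_lt continuous_g1 continuous_const).inter (isOpen_lt continuous_const continuous_g2)
lemma isOpen_RC : IsOpen RC :=
  (isOpen_lt continuous_const continuous_g1).inter (isOpen_lt continuous_g2 continuous_const)
lemma isOpen_RDp : IsOpen RDp :=
  (isOpen_lt continuous_const continuous_g1).inter
    ((isOpen_lt continuous_const continuous_g2).inter
      (isOpen_lt continuous_const continuous_fst))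
lemma isOpen_RDm : IsOpen RDm :=
  (isOpen_lt continuous_const continuous_g1).inter
    ((isOpen_lt continuous_const continuous_g2).inter
      (isOpen_lt continuous_fst continuous_const))

lemma mem_S18_iff (x : ℝ × ℝ × ℝ) : x ∈ S18 ↔ g1 x ≠ 0 ∧ g2 x ≠ 0 := by
  simp [S18, g1, g2, not_or]

lemma RA_subset : RA ⊆ S18 := fun x hx => (mem_S18_iff x).2 ⟨hx.1.ne, hx.2.ne⟩
lemma RB_subset : RB ⊆ S18 := fun x hx => (mem_S18_iff x).2 ⟨hx.1.ne, hx.2.ne'⟩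
lemma RC_subset : RC ⊆ S18 := fun x hx => (mem_S18_iff x).2 ⟨hx.1.ne', hx.2.ne⟩
lemma RDp_subset : RDp ⊆ S18 := fun x hx => (mem_S18_iff x).2 ⟨hx.1.ne', hx.2.1.ne'⟩
lemma RDm_subset : RDm ⊆ S18 := fun x hx => (mem_S18_iff x).2 ⟨hx.1.ne', hx.2.1.ne'⟩

lemma cover (x : ℝ × ℝ × ℝ) (hx : x ∈ S18) : x ∈ RA ∨ x ∈ RB ∨ x ∈ RC ∨ x ∈ RDp ∨ x ∈ RDm := by
  obtain ⟨h1, h2⟩ := (mem_S18_iff x).1 hx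
  rcases h1.lt_or_gt with h1 | h1 <;> rcases h2.lt_or_gt with h2 | h2
  · exact Or.inl ⟨h1, h2⟩
  · exact Or.inr (Or.inl ⟨h1, h2⟩)
  · exact Or.inr (Or.inr (Or.inl ⟨h1, h2⟩))
  · rcases lt_trichotomy x.1 0 with hp | hp | hp
    · exact Or.inr (Or.inr (Or.inr (Or.inr ⟨h1, h2, hp⟩)))
    · exfalso
      have h0 : gamR (x.1, x.2.1) = 0 := by rw [hp]; exact gamR_zero_left _
      rw [g1, h0] at h1; rw [g2, h0] at h2
      have := sqrt2_pos; linarith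
    · exact Or.inr (Or.inr (Or.inr (Or.inl ⟨h1, h2, hp⟩)))

lemma convlt {a b u v c : ℝ} (ha : 0 ≤ a) (hb : 0 ≤ b) (hab : a + b = 1)
    (hu : c < u) (hv : c < v) : c < a * u + b * v := by
  rcases ha.eq_or_lt with h | h
  · have hb1 : b = 1 := by linarith
    rw [← h, hb1]; linarith
  · have hc : a * c + b * c = c := by rw [← add_mul, hab, one_mul]
    nlinarith [mul_lt_mul_of_pos_left hu h, mul_le_mul_of_nonneg_left hv.le hb]

lemma convgt {a b u v c : ℝ} (ha : 0 ≤ a) (hb : 0 ≤ b) (hab : a + b = 1)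
    (hu : u < c) (hv : v < c) : a * u + b * v < c := by
  have := convlt ha hb hab (neg_lt_neg hu) (neg_lt_neg hv)
  linarith

lemma convlt2 {a b u v u' v' : ℝ} (ha : 0 ≤ a) (hb : 0 ≤ b) (hab : a + b = 1)
    (h : u < u') (h' : v < v') : a * u + b * v < a * u' + b * v' := by
  rcases ha.eq_or_lt with h0 | h0
  · have hb1 : b = 1 := by linarith
    rw [← h0, hb1]; simpa using h'
  · have h1 : a * u < a * u' := mul_lt_mul_of_pos_left h h0
    have h2 : b * v ≤ b * v' := mul_le_mul_of_nonneg_left h'.le hb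
    linarith

lemma joinedIn_seg {s : Set (ℝ × ℝ × ℝ)} (x y : ℝ × ℝ × ℝ)
    (h : ∀ a b : ℝ, 0 ≤ a → 0 ≤ b → a + b = 1 →
      ((a * x.1 + b * y.1, a * x.2.1 + b * y.2.1, a * x.2.2 + b * y.2.2) : ℝ × ℝ × ℝ) ∈ s) :
    JoinedIn s x y := by
  have hsub : segment ℝ x y ⊆ s := by
    rintro z ⟨a, b, ha, hb, hab, rfl⟩
    have hz : a • x + b • y =
        ((a * x.1 + b * y.1, a * x.2.1 + b * y.2.1, a * x.2.2 + b * y.2.2) : ℝ × ℝ × ℝ) := by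
      simp [Prod.ext_iff, Prod.smul_def, smul_eq_mul]
    rw [hz]
    exact h a b ha hb hab
  exact (((convex_segment x y).isPathConnected ⟨x, left_mem_segment ℝ x y⟩).joinedIn
    x (left_mem_segment ℝ x y) y (right_mem_segment ℝ x y)).mono hsub

lemma mem_RA {p q r : ℝ} :
    ((p, q, r) : ℝ × ℝ × ℝ) ∈ RA ↔ gamR (p, q) < r ∧ gamR (p, q) + r < Real.sqrt 2 := by
  simp only [RA, Set.mem_setOf_eq, g1, g2]
  constructor <;> rintro ⟨h1, h2⟩ <;> constructor <;> linarith

lemma mem_RB {p q r : ℝ} :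
    ((p, q, r) : ℝ × ℝ × ℝ) ∈ RB ↔ gamR (p, q) < r ∧ Real.sqrt 2 < gamR (p, q) + r := by
  simp only [RB, Set.mem_setOf_eq, g1, g2]
  constructor <;> rintro ⟨h1, h2⟩ <;> constructor <;> linarith

lemma mem_RC {p q r : ℝ} :
    ((p, q, r) : ℝ × ℝ × ℝ) ∈ RC ↔ r < gamR (p, q) ∧ gamR (p, q) + r < Real.sqrt 2 := by
  simp only [RC, Set.mem_setOf_eq, g1, g2]
  constructor <;> rintro ⟨h1, h2⟩ <;> constructor <;> linarith

lemma isPreconnected_RA : IsPreconnected RA := by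
  have hpath : IsPathConnected RA := by
    refine ⟨(0, 0, Real.sqrt 2 / 2), ?_, ?_⟩
    · rw [mem_RA, gamR_zero_left]
      constructor <;> [linarith [sqrt2_pos]; linarith [sqrt2_pos]]
    · rintro ⟨p, q, r⟩ hy
      rw [mem_RA] at hy
      obtain ⟨h1, h2⟩ := hy
      set c := Real.sqrt 2 / 2 with hc
      have hcc : c + c = Real.sqrt 2 := by rw [hc]; ring
      have hγc : gamR (p, q) < c := by linarith
      have piece1 : JoinedIn RA ((p, q, r) : ℝ × ℝ × ℝ) ((p, q, c) : ℝ × ℝ × ℝ) := by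
        apply joinedIn_seg
        intro a b ha hb hab
        simp only
        have hp' : a * p + b * p = p := by rw [← add_mul, hab, one_mul]
        have hq' : a * q + b * q = q := by rw [← add_mul, hab, one_mul]
        rw [hp', hq', mem_RA]
        constructor
        · exact convlt ha hb hab h1 hγc
        · have := convgt ha hb hab (show r < Real.sqrt 2 - gamR (p,q) by linarith)
            (show c < Real.sqrt 2 - gamR (p,q) by linarith)
          linarith
      have piece2 : JoinedIn RA ((p, q, c) : ℝ × ℝ × ℝ) ((0, 0, c) : ℝ × ℝ × ℝ) := by
        apply joinedIn_seg
        intro a b ha hb hab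
        simp only
        have hc' : a * c + b * c = c := by rw [← add_mul, hab, one_mul]
        rw [mul_zero, add_zero, add_zero, hc', mem_RA]
        have hsm : gamR (a * p, a * q) = a * gamR (p, q) := gamR_smul ha p q
        have ha1 : a ≤ 1 := by linarith
        have hlt : a * gamR (p, q) < c := by
          rcases le_or_gt (gamR (p, q)) 0 with hg | hg
          · have : a * gamR (p, q) ≤ 0 := mul_nonpos_of_nonneg_of_nonpos ha hg
            linarith [sqrt2_pos]
          · nlinarith
        rw [hsm]
        constructor <;> linarith
      exact (piece1.trans piece2).symm
  exact hpath.isConnected.isPreconnected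

lemma isPreconnected_RB : IsPreconnected RB := by
  have hs2 := sqrt2_pos
  have hs2' := sqrt2_lt
  have hpath : IsPathConnected RB := by
    refine ⟨(0, 0, 2), ?_, ?_⟩
    · rw [mem_RB, gamR_zero_left]
      constructor <;> linarith
    · rintro ⟨p, q, r⟩ hy
      rw [mem_RB] at hy
      obtain ⟨h1, h2⟩ := hy
      set M := max r (|p| + Real.sqrt 2 + 1) with hM
      have hMr : r ≤ M := le_max_left _ _
      have hMp : |p| + Real.sqrt 2 + 1 ≤ M := le_max_right _ _
      have habs := abs_gamR_le_fst (p, q)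
      have hγ1 : gamR (p, q) ≤ |p| := le_trans (le_abs_self _) (by simpa using habs)
      have hγ2 : -|p| ≤ gamR (p, q) := by
        have := neg_abs_le (gamR (p, q)); simp only at habs; linarith
      have hpnn : (0:ℝ) ≤ |p| := abs_nonneg p
      have piece1 : JoinedIn RB ((p, q, r) : ℝ × ℝ × ℝ) ((p, q, M) : ℝ × ℝ × ℝ) := by
        apply joinedIn_seg
        intro a b ha hb hab
        simp only
        have hp' : a * p + b * p = p := by rw [← add_mul, hab, one_mul]
        have hq' : a * q + b * q = q := by rw [← add_mul, hab, one_mul]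
        rw [hp', hq', mem_RB]
        constructor
        · exact convlt ha hb hab h1 (by linarith)
        · have := convlt ha hb hab (show Real.sqrt 2 - gamR (p,q) < r by linarith)
            (show Real.sqrt 2 - gamR (p,q) < M by linarith)
          linarith
      have piece2 : JoinedIn RB ((p, q, M) : ℝ × ℝ × ℝ) ((0, 0, M) : ℝ × ℝ × ℝ) := by
        apply joinedIn_seg
        intro a b ha hb hab
        simp only
        have hM' : a * M + b * M = M := by rw [← add_mul, hab, one_mul]
        rw [mul_zero, add_zero, add_zero, hM', mem_RB]
        have hsm : gamR (a * p, a * q) = a * gamR (p, q) := gamR_smul ha p q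
        have ha1 : a ≤ 1 := by linarith
        have hb1 : |a * gamR (p, q)| ≤ |p| := by
          rw [abs_mul, abs_of_nonneg ha]
          calc a * |gamR (p, q)| ≤ 1 * |gamR (p, q)| :=
                mul_le_mul_of_nonneg_right ha1 (abs_nonneg _)
            _ = |gamR (p, q)| := one_mul _
            _ ≤ |p| := by simpa using habs
        have hu : a * gamR (p, q) ≤ |p| := le_trans (le_abs_self _) hb1
        have hl : -|p| ≤ a * gamR (p, q) := by linarith [neg_abs_le (a * gamR (p, q))]
        rw [hsm]
        constructor <;> linarith
      have piece3 : JoinedIn RB ((0, 0, M) : ℝ × ℝ × ℝ) ((0, 0, 2) : ℝ × ℝ × ℝ) := by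
        apply joinedIn_seg
        intro a b ha hb hab
        simp only
        rw [mem_RB]
        rw [show a * (0:ℝ) + b * 0 = 0 by ring, gamR_zero_left]
        have := convlt ha hb hab (show Real.sqrt 2 < M by linarith)
          (show Real.sqrt 2 < (2:ℝ) by linarith)
        constructor <;> linarith
      exact ((piece1.trans piece2).trans piece3).symm
  exact hpath.isConnected.isPreconnected

lemma isPreconnected_RC : IsPreconnected RC := by
  have hs2 := sqrt2_pos
  have hs2' := sqrt2_lt
  have hpath : IsPathConnected RC := by
    refine ⟨(0, 0, -1), ?_, ?_⟩
    · rw [mem_RC, gamR_zero_left]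
      constructor <;> linarith
    · rintro ⟨p, q, r⟩ hy
      rw [mem_RC] at hy
      obtain ⟨h1, h2⟩ := hy
      set m := min r (-(|p| + 1)) with hm
      have hmr : m ≤ r := min_le_left _ _
      have hmp : m ≤ -(|p| + 1) := min_le_right _ _
      have habs := abs_gamR_le_fst (p, q)
      have hγ1 : gamR (p, q) ≤ |p| := le_trans (le_abs_self _) (by simpa using habs)
      have hγ2 : -|p| ≤ gamR (p, q) := by
        have := neg_abs_le (gamR (p, q)); simp only at habs; linarith
      have hpnn : (0:ℝ) ≤ |p| := abs_nonneg p
      have piece1 : JoinedIn RC ((p, q, r) : ℝ × ℝ × ℝ) ((p, q, m) : ℝ × ℝ × ℝ) := by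
        apply joinedIn_seg
        intro a b ha hb hab
        simp only
        have hp' : a * p + b * p = p := by rw [← add_mul, hab, one_mul]
        have hq' : a * q + b * q = q := by rw [← add_mul, hab, one_mul]
        rw [hp', hq', mem_RC]
        constructor
        · exact convgt ha hb hab h1 (by linarith)
        · have := convgt ha hb hab (show r < Real.sqrt 2 - gamR (p,q) by linarith)
            (show m < Real.sqrt 2 - gamR (p,q) by linarith)
          linarith
      have piece2 : JoinedIn RC ((p, q, m) : ℝ × ℝ × ℝ) ((0, 0, m) : ℝ × ℝ × ℝ) := by
        apply joinedIn_seg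
        intro a b ha hb hab
        simp only
        have hm' : a * m + b * m = m := by rw [← add_mul, hab, one_mul]
        rw [mul_zero, add_zero, add_zero, hm', mem_RC]
        have hsm : gamR (a * p, a * q) = a * gamR (p, q) := gamR_smul ha p q
        have ha1 : a ≤ 1 := by linarith
        have hb1 : |a * gamR (p, q)| ≤ |p| := by
          rw [abs_mul, abs_of_nonneg ha]
          calc a * |gamR (p, q)| ≤ 1 * |gamR (p, q)| :=
                mul_le_mul_of_nonneg_right ha1 (abs_nonneg _)
            _ = |gamR (p, q)| := one_mul _
            _ ≤ |p| := by simpa using habs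
        have hu : a * gamR (p, q) ≤ |p| := le_trans (le_abs_self _) hb1
        have hl : -|p| ≤ a * gamR (p, q) := by linarith [neg_abs_le (a * gamR (p, q))]
        rw [hsm]
        constructor <;> linarith
      have piece3 : JoinedIn RC ((0, 0, m) : ℝ × ℝ × ℝ) ((0, 0, -1) : ℝ × ℝ × ℝ) := by
        apply joinedIn_seg
        intro a b ha hb hab
        simp only
        rw [mem_RC]
        rw [show a * (0:ℝ) + b * 0 = 0 by ring, gamR_zero_left]
        have := convgt ha hb hab (show m < 0 by linarith) (show (-1:ℝ) < 0 by linarith)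
        constructor <;> linarith
      exact ((piece1.trans piece2).trans piece3).symm
  exact hpath.isConnected.isPreconnected

lemma RDp_eq : RDp = {x : ℝ × ℝ × ℝ | x.2.2 < x.1 ∧ x.2.2 < x.2.1 ∧
    Real.sqrt 2 - x.1 < x.2.2 ∧ Real.sqrt 2 - x.2.1 < x.2.2} := by
  have hs2 := sqrt2_pos
  ext ⟨p, q, r⟩
  simp only [RDp, Set.mem_setOf_eq, g1, g2]
  constructor
  · rintro ⟨h1, h2, hp⟩
    have hγpos : 0 < gamR (p, q) := by linarith
    have hq : 0 < q := by
      by_contra hq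
      push_neg at hq
      have hpq : p * q ≤ 0 := mul_nonpos_of_nonneg_of_nonpos hp.le hq
      have : gamR (p, q) ≤ 0 := by
        rw [gamR_eq]
        exact div_nonpos_of_nonpos_of_nonneg (by simpa using hpq)
          (le_trans (abs_nonneg _) (le_max_left _ _))
      linarith
    have hγ : gamR (p, q) = min p q := gamR_pos_pos hp hq
    rw [hγ] at h1 h2
    have hl := min_le_left p q
    have hr := min_le_right p q
    exact ⟨by linarith, by linarith, by linarith, by linarith⟩
  · rintro ⟨h1, h2, h3, h4⟩
    have hp : 0 < p := by linarith
    have hq : 0 < q := by linarith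
    have hγ : gamR (p, q) = min p q := gamR_pos_pos hp hq
    have hmin : r < min p q := lt_min h1 h2
    have hmin2 : Real.sqrt 2 - r < min p q := lt_min (by linarith) (by linarith)
    exact ⟨by rw [hγ]; linarith, by rw [hγ]; linarith, hp⟩

lemma RDm_eq : RDm = {x : ℝ × ℝ × ℝ | x.2.2 < -x.1 ∧ x.2.2 < -x.2.1 ∧
    Real.sqrt 2 + x.1 < x.2.2 ∧ Real.sqrt 2 + x.2.1 < x.2.2} := by
  have hs2 := sqrt2_pos
  ext ⟨p, q, r⟩
  simp only [RDm, Set.mem_setOf_eq, g1, g2]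
  constructor
  · rintro ⟨h1, h2, hp⟩
    have hγpos : 0 < gamR (p, q) := by linarith
    have hq : q < 0 := by
      by_contra hq
      push_neg at hq
      have hpq : p * q ≤ 0 := mul_nonpos_of_nonpos_of_nonneg hp.le hq
      have : gamR (p, q) ≤ 0 := by
        rw [gamR_eq]
        exact div_nonpos_of_nonpos_of_nonneg (by simpa using hpq)
          (le_trans (abs_nonneg _) (le_max_left _ _))
      linarith
    have hγ : gamR (p, q) = -(max p q) := gamR_neg_neg hp hq
    rw [hγ] at h1 h2
    have hl := le_max_left p q
    have hr := le_max_right p q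
    exact ⟨by linarith, by linarith, by linarith, by linarith⟩
  · rintro ⟨h1, h2, h3, h4⟩
    have hp : p < 0 := by linarith
    have hq : q < 0 := by linarith
    have hγ : gamR (p, q) = -(max p q) := gamR_neg_neg hp hq
    have hmax : max p q < -r := max_lt (by linarith) (by linarith)
    have hmax2 : max p q < r - Real.sqrt 2 := max_lt (by linarith) (by linarith)
    exact ⟨by rw [hγ]; linarith, by rw [hγ]; linarith, hp⟩

lemma isPreconnected_RDp : IsPreconnected RDp := by
  have hconv : Convex ℝ RDp := by
    rw [RDp_eq]
    intro x hx y hy a b ha hb hab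
    simp only [Set.mem_setOf_eq] at hx hy ⊢
    obtain ⟨hx1, hx2, hx3, hx4⟩ := hx
    obtain ⟨hy1, hy2, hy3, hy4⟩ := hy
    have hcomp : (a • x + b • y : ℝ × ℝ × ℝ) =
        (a * x.1 + b * y.1, a * x.2.1 + b * y.2.1, a * x.2.2 + b * y.2.2) := by
      simp [Prod.ext_iff, Prod.smul_def, smul_eq_mul]
    rw [hcomp]
    dsimp only
    have hs : a * Real.sqrt 2 + b * Real.sqrt 2 = Real.sqrt 2 := by
      rw [← add_mul, hab, one_mul]
    refine ⟨convlt2 ha hb hab hx1 hy1, convlt2 ha hb hab hx2 hy2, ?_, ?_⟩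
    · linarith [convlt2 ha hb hab hx3 hy3, hs]
    · linarith [convlt2 ha hb hab hx4 hy4, hs]
  exact hconv.isPreconnected

lemma isPreconnected_RDm : IsPreconnected RDm := by
  have hconv : Convex ℝ RDm := by
    rw [RDm_eq]
    intro x hx y hy a b ha hb hab
    simp only [Set.mem_setOf_eq] at hx hy ⊢
    obtain ⟨hx1, hx2, hx3, hx4⟩ := hx
    obtain ⟨hy1, hy2, hy3, hy4⟩ := hy
    have hcomp : (a • x + b • y : ℝ × ℝ × ℝ) =
        (a * x.1 + b * y.1, a * x.2.1 + b * y.2.1, a * x.2.2 + b * y.2.2) := by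
      simp [Prod.ext_iff, Prod.smul_def, smul_eq_mul]
    rw [hcomp]
    dsimp only
    have hs : a * Real.sqrt 2 + b * Real.sqrt 2 = Real.sqrt 2 := by
      rw [← add_mul, hab, one_mul]
    refine ⟨?_, ?_, ?_, ?_⟩
    · linarith [convlt2 ha hb hab hx1 hy1]
    · linarith [convlt2 ha hb hab hx2 hy2]
    · linarith [convlt2 ha hb hab hx3 hy3, hs]
    · linarith [convlt2 ha hb hab hx4 hy4, hs]
  exact hconv.isPreconnected

open Topology

def Rset : Fin 5 → Set (ℝ × ℝ × ℝ) := ![RA, RB, RC, RDp, RDm]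

lemma Rset_subset : ∀ i, Rset i ⊆ S18 := by
  intro i
  fin_cases i
  · exact RA_subset
  · exact RB_subset
  · exact RC_subset
  · exact RDp_subset
  · exact RDm_subset

lemma isOpen_Rset : ∀ i, IsOpen (Rset i) := by
  intro i
  fin_cases i
  · exact isOpen_RA
  · exact isOpen_RB
  · exact isOpen_RC
  · exact isOpen_RDp
  · exact isOpen_RDm

lemma isPreconnected_Rset : ∀ i, IsPreconnected (Rset i) := by
  intro i
  fin_cases i
  · exact isPreconnected_RA
  · exact isPreconnected_RB
  · exact isPreconnected_RC
  · exact isPreconnected_RDp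
  · exact isPreconnected_RDm

lemma Rset_disj {x : ℝ × ℝ × ℝ} {i j : Fin 5} (hi : x ∈ Rset i) (hj : x ∈ Rset j) : i = j := by
  fin_cases i <;> fin_cases j <;> first
    | rfl
    | (exfalso
       simp only [Rset, Matrix.cons_val_zero, Matrix.cons_val_one, Matrix.head_cons,
         Matrix.cons_val_two, Matrix.tail_cons, Matrix.cons_val_three, Matrix.cons_val_four,
         RA, RB, RC, RDp, RDm, Set.mem_setOf_eq, Fin.isValue] at hi hj
       obtain ⟨h1, h2⟩ := hi
       obtain ⟨h3, h4⟩ := hj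
       linarith)

attribute [local instance] Classical.propDecidable

noncomputable def F0 : ℝ × ℝ × ℝ → Fin 5 := fun x =>
  if x ∈ RA then 0 else if x ∈ RB then 1 else if x ∈ RC then 2 else if x ∈ RDp then 3 else 4

lemma F0_mem {x : ℝ × ℝ × ℝ} (hx : x ∈ S18) : x ∈ Rset (F0 x) := by
  unfold F0
  split_ifs with h1 h2 h3 h4
  · simpa [Rset] using h1
  · simpa [Rset] using h2
  · simpa [Rset] using h3
  · simpa [Rset] using h4
  · rcases cover x hx with h | h | h | h | h
    · exact absurd h h1
    · exact absurd h h2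
    · exact absurd h h3
    · exact absurd h h4
    · simpa [Rset] using h

lemma F0_eq {x : ℝ × ℝ × ℝ} {i : Fin 5} (hx : x ∈ S18) (hi : x ∈ Rset i) : F0 x = i :=
  Rset_disj (F0_mem hx) hi

lemma preconn_sub (i : Fin 5) :
    IsPreconnected ((Subtype.val ⁻¹' (Rset i)) : Set ↥S18) := by
  have himg : (Subtype.val : ↥S18 → ℝ × ℝ × ℝ) ''
      ((Subtype.val : ↥S18 → ℝ × ℝ × ℝ) ⁻¹' (Rset i)) = Rset i := by
    rw [Set.image_preimage_eq_inter_range, Subtype.range_val,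
      Set.inter_eq_left.2 (Rset_subset i)]
  have h := isPreconnected_Rset i
  rw [← himg] at h
  exact Topology.IsInducing.subtypeVal.isPreconnected_image.mp h

noncomputable def Fc : ↥S18 → Fin 5 := fun y => F0 y.val

lemma Fc_fiber (i : Fin 5) : Fc ⁻¹' {i} = Subtype.val ⁻¹' (Rset i) := by
  ext y
  simp only [Set.mem_preimage, Set.mem_singleton_iff, Fc]
  constructor
  · rintro rfl; exact F0_mem y.2
  · intro h; exact F0_eq y.2 h

lemma continuous_Fc : Continuous Fc := by
  rw [continuous_discrete_rng]
  intro b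
  rw [Fc_fiber]
  exact (isOpen_Rset b).preimage continuous_subtype_val

noncomputable def pt : Fin 5 → ℝ × ℝ × ℝ :=
  ![(0, 0, 1/2), (0, 0, 2), (0, 0, -1), (1, 1, 1/2), (-1, -1, 1/2)]

lemma ptA_mem : ((0:ℝ), (0:ℝ), (1/2:ℝ)) ∈ RA := by
  rw [mem_RA, gamR_zero_left]
  constructor <;> linarith [one_lt_sqrt2]

lemma ptB_mem : ((0:ℝ), (0:ℝ), (2:ℝ)) ∈ RB := by
  rw [mem_RB, gamR_zero_left]
  constructor <;> linarith [sqrt2_pos, sqrt2_lt]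

lemma ptC_mem : ((0:ℝ), (0:ℝ), (-1:ℝ)) ∈ RC := by
  rw [mem_RC, gamR_zero_left]
  constructor <;> linarith [sqrt2_pos]

lemma ptDp_mem : ((1:ℝ), (1:ℝ), (1/2:ℝ)) ∈ RDp := by
  rw [RDp_eq]
  refine ⟨by norm_num, by norm_num, ?_, ?_⟩ <;> · simp only; linarith [sqrt2_lt]

lemma ptDm_mem : ((-1:ℝ), (-1:ℝ), (1/2:ℝ)) ∈ RDm := by
  rw [RDm_eq]
  refine ⟨by norm_num, by norm_num, ?_, ?_⟩ <;> · simp only; linarith [sqrt2_lt]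

lemma pt_mem : ∀ i, pt i ∈ Rset i := by
  intro i
  fin_cases i
  · exact ptA_mem
  · exact ptB_mem
  · exact ptC_mem
  · exact ptDp_mem
  · exact ptDm_mem

lemma card_components : Nat.card (ConnectedComponents ↥S18) = 5 := by
  have hbij : Function.Bijective continuous_Fc.connectedComponentsLift := by
    constructor
    · intro u v huv
      obtain ⟨x, rfl⟩ := ConnectedComponents.surjective_coe u
      obtain ⟨y, rfl⟩ := ConnectedComponents.surjective_coe v
      rw [Continuous.connectedComponentsLift_apply_coe,
        Continuous.connectedComponentsLift_apply_coe] at huv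
      set i := Fc x with hi
      have hx : x ∈ (Subtype.val ⁻¹' (Rset i) : Set ↥S18) := F0_mem x.2
      have hy : y ∈ (Subtype.val ⁻¹' (Rset i) : Set ↥S18) := by
        have : Fc y = i := huv.symm
        rw [← this]
        exact F0_mem y.2
      have hsub := (preconn_sub i).subset_connectedComponent hx
      rw [ConnectedComponents.coe_eq_coe]
      exact connectedComponent_eq (hsub hy)
    · intro i
      refine ⟨((⟨pt i, Rset_subset i (pt_mem i)⟩ : ↥S18) : ConnectedComponents ↥S18), ?_⟩
      rw [Continuous.connectedComponentsLift_apply_coe]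
      exact F0_eq (Rset_subset i (pt_mem i)) (pt_mem i)
  rw [Nat.card_eq_of_bijective _ hbij]
  simp

lemma compIn_ne {p q : ℝ × ℝ × ℝ} {i j : Fin 5} (hp : p ∈ Rset i) (hq : q ∈ Rset j)
    (hij : i ≠ j) : connectedComponentIn S18 p ≠ connectedComponentIn S18 q := by
  intro h
  have hpS : p ∈ S18 := Rset_subset i hp
  have hqS : q ∈ S18 := Rset_subset j hq
  have hC : IsPreconnected (connectedComponentIn S18 p) := isPreconnected_connectedComponentIn
  set v := ⋃ k ∈ ({k | k ≠ i} : Set (Fin 5)), Rset k with hv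
  have hvo : IsOpen v := isOpen_biUnion fun k _ => isOpen_Rset k
  have hsub : connectedComponentIn S18 p ⊆ Rset i ∪ v := by
    intro z hz
    have hzS : z ∈ S18 := connectedComponentIn_subset S18 p hz
    rcases eq_or_ne (F0 z) i with hzi | hzi
    · exact Or.inl (hzi ▸ F0_mem hzS)
    · exact Or.inr (Set.mem_biUnion hzi (F0_mem hzS))
  have hpu : (connectedComponentIn S18 p ∩ Rset i).Nonempty :=
    ⟨p, mem_connectedComponentIn hpS, hp⟩
  have hqv : (connectedComponentIn S18 p ∩ v).Nonempty := by
    refine ⟨q, ?_, Set.mem_biUnion (show j ∈ {k | k ≠ i} from hij.symm) hq⟩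
    rw [h]
    exact mem_connectedComponentIn hqS
  obtain ⟨z, _, hzu, hzv⟩ := hC (Rset i) v (isOpen_Rset i) hvo hsub hpu hqv
  obtain ⟨k, hk, hzk⟩ := Set.mem_iUnion₂.1 hzv
  exact hk (Rset_disj hzk hzu)

/-- `S` has exactly 5 connected components, and the five listed points lie in `S`,
in pairwise distinct connected components. -/
theorem stmt18 :
    Nat.card (ConnectedComponents ↥S18) = 5 ∧
    (∀ p ∈ ([((0:ℝ),(0:ℝ),(2:ℝ)), (0,0,-1), (-1,-1,1/2), (1,1,1/2), (0,0,1/2)] :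
        List (ℝ × ℝ × ℝ)), p ∈ S18) ∧
    ([((0:ℝ),(0:ℝ),(2:ℝ)), (0,0,-1), (-1,-1,1/2), (1,1,1/2), (0,0,1/2)] :
        List (ℝ × ℝ × ℝ)).Pairwise
      (fun p q => connectedComponentIn S18 p ≠ connectedComponentIn S18 q) := by
  have hB : ((0:ℝ),(0:ℝ),(2:ℝ)) ∈ Rset 1 := ptB_mem
  have hC : ((0:ℝ),(0:ℝ),(-1:ℝ)) ∈ Rset 2 := ptC_mem
  have hDm : ((-1:ℝ),(-1:ℝ),(1/2:ℝ)) ∈ Rset 4 := ptDm_mem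
  have hDp : ((1:ℝ),(1:ℝ),(1/2:ℝ)) ∈ Rset 3 := ptDp_mem
  have hA : ((0:ℝ),(0:ℝ),(1/2:ℝ)) ∈ Rset 0 := ptA_mem
  refine ⟨card_components, ?_, ?_⟩
  · intro p hp
    simp only [List.mem_cons, List.not_mem_nil, or_false] at hp
    rcases hp with rfl | rfl | rfl | rfl | rfl
    · exact Rset_subset 1 hB
    · exact Rset_subset 2 hC
    · exact Rset_subset 4 hDm
    · exact Rset_subset 3 hDp
    · exact Rset_subset 0 hA
  · refine List.Pairwise.cons ?_ (List.Pairwise.cons ?_ (List.Pairwise.cons ?_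
      (List.Pairwise.cons ?_ (List.pairwise_singleton _ _))))
    · intro q hq
      simp only [List.mem_cons, List.not_mem_nil, or_false] at hq
      rcases hq with rfl | rfl | rfl | rfl
      · exact compIn_ne hB hC (by decide)
      · exact compIn_ne hB hDm (by decide)
      · exact compIn_ne hB hDp (by decide)
      · exact compIn_ne hB hA (by decide)
    · intro q hq
      simp only [List.mem_cons, List.not_mem_nil, or_false] at hq
      rcases hq with rfl | rfl | rfl
      · exact compIn_ne hC hDm (by decide)
      · exact compIn_ne hC hDp (by decide)
      · exact compIn_ne hC hA (by decide)
    · intro q hq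
      simp only [List.mem_cons, List.not_mem_nil, or_false] at hq
      rcases hq with rfl | rfl
      · exact compIn_ne hDm hDp (by decide)
      · exact compIn_ne hDm hA (by decide)
    · intro q hq
      simp only [List.mem_cons, List.not_mem_nil, or_false] at hq
      rcases hq with rfl
      exact compIn_ne hDp hA (by decide)
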